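/- Let (N,h) be a pseudo-Riemannian manifold with a parallel symmetric 2-tensor S whose endomorphism is a projection (S̃² = S̃). On M := (0, π/2) × N define g = ds² + sin²(s)(h - S) + cos²(s)S. Then g is nondegenerate and the cone over (M,g) is decomposable: it admits a parallel symmetric 2-tensor T with T̃² = T̃, with associated Obata function α(s,n) = cos²(s). -/

import Mathlib

noncomputable section

/-- Covariant derivative of the vector field `Y` along `X`, for the connection
with Christoffel symbols `Γ` (chart presentation of a pseudo-Riemannian manifold):
`(D_X Y)(p) = dY_p(X(p)) + Γ_p(X(p), Y(p))`. -/
def covVF {E : Type*} [NormedAddCommGroup E] [NormedSpace ℝ E]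
    (Γ : E → E → E → E) (X Y : E → E) : E → E :=
  fun p => fderiv ℝ Y p (X p) + Γ p (X p) (Y p)

/-- `g` is pointwise a symmetric bilinear form (a pseudo-Riemannian metric in a chart). -/
def IsMetric {E : Type*} [NormedAddCommGroup E] [NormedSpace ℝ E]
    (g : E → E → E → ℝ) : Prop :=
  ∀ x, (∀ u, IsLinearMap ℝ (g x u)) ∧ (∀ v, IsLinearMap ℝ (fun u => g x u v)) ∧
    (∀ u v, g x u v = g x v u)

/-- `g` is nondegenerate at every point of `s`. -/
def Nondeg {E : Type*} [NormedAddCommGroup E] [NormedSpace ℝ E]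
    (g : E → E → E → ℝ) (s : Set E) : Prop :=
  ∀ x ∈ s, ∀ u, (∀ v, g x u v = 0) → u = 0

/-- `Γ` is the Levi-Civita connection of `g` on `s`: torsion free (symmetric
Christoffel symbols) and compatible with the metric. -/
def IsLC {E : Type*} [NormedAddCommGroup E] [NormedSpace ℝ E]
    (g : E → E → E → ℝ) (Γ : E → E → E → E) (s : Set E) : Prop :=
  (∀ x ∈ s, ∀ u v, Γ x u v = Γ x v u) ∧
  (∀ x ∈ s, ∀ u v w, fderiv ℝ (fun y => g y v w) x u
      = g x (Γ x u v) w + g x v (Γ x u w))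

/-- Covariant Hessian `DDf` of a function (evaluated on constant directions,
which suffices since the Hessian is tensorial). -/
def hessT {E : Type*} [NormedAddCommGroup E] [NormedSpace ℝ E]
    (Γ : E → E → E → E) (f : E → ℝ) (x u v : E) : ℝ :=
  fderiv ℝ (fun y => fderiv ℝ f y v) x u - fderiv ℝ f x (Γ x u v)

/-- Covariant derivative `DT` of a 2-tensor field `T`. -/
def covTen {E : Type*} [NormedAddCommGroup E] [NormedSpace ℝ E]
    (Γ : E → E → E → E) (T : E → E → E → ℝ) (x u v w : E) : ℝ :=
  fderiv ℝ (fun y => T y v w) x u - T x (Γ x u v) w - T x v (Γ x u w)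

/-- The Obata equation (*) on `s`:
`DDDα(X,Y,Z) + 2(Dα⊗g)(X,Y,Z) + (Dα⊗g)(Y,X,Z) + (Dα⊗g)(Z,X,Y) = 0`. -/
def ObataEq {E : Type*} [NormedAddCommGroup E] [NormedSpace ℝ E]
    (g : E → E → E → ℝ) (Γ : E → E → E → E) (α : E → ℝ) (s : Set E) : Prop :=
  ∀ x ∈ s, ∀ u v w : E,
    covTen Γ (hessT Γ α) x u v w
      + 2 * (fderiv ℝ α x u * g x v w)
      + fderiv ℝ α x v * g x u w + fderiv ℝ α x w * g x u v = 0

/-- The cone metric `ĝ = dr² + r² g` on the cone `M̂ = ℝ₊* × M`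
(points `p = (r, m)`, tangent vectors `u = (a, X)` with `a` the `∂_r`-component). -/
def coneMetric {E : Type*} [NormedAddCommGroup E] [NormedSpace ℝ E]
    (g : E → E → E → ℝ) : (ℝ × E) → (ℝ × E) → (ℝ × E) → ℝ :=
  fun p u v => u.1 * v.1 + p.1 ^ 2 * g p.2 u.2 v.2

/-- The cone `M̂ = ℝ₊* × M` inside the chart `ℝ × M`. -/
def coneSet (E : Type*) : Set (ℝ × E) := {p : ℝ × E | 0 < p.1}

/-!
With `τ = r sin s` and `ρ = r cos s` the cone metric splits as
`ĝ = (dτ² + τ² (h - S)) + (dρ² + ρ² S)`, the sum of the flat cone metrics over the two parallel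
factors of `N`. Hence `T = dρ² + ρ² S` is parallel, `T̃` is the `ĝ`-orthogonal projection onto the
second factor, and `T(∂_r, ∂_r) = (∂_r ρ)² = cos² s`. Parallelism is checked in coordinates
through the Koszul formula. The differentiability of `h` and `S`, which the compatibility
equations only see through junk values, is extracted from the existence of the Levi-Civita
connection of the cone.
-/

open Real Set

section LeviCivita

variable {E : Type*} [NormedAddCommGroup E] [NormedSpace ℝ E]
  {g : E → E → E → ℝ} {Γ : E → E → E → E} {s : Set E} {x : E}

lemma fderiv_apply_eq_of_covTen_eq_zero {B : E → E → E → ℝ} {u v w : E}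
    (hB : covTen Γ B x u v w = 0) :
    fderiv ℝ (fun y => B y v w) x u = B x (Γ x u v) w + B x v (Γ x u w) := by
  unfold covTen at hB
  linarith

lemma IsLC.covTen_eq_zero (hΓ : IsLC g Γ s) (hx : x ∈ s) (u v w : E) :
    covTen Γ g x u v w = 0 := by
  rw [covTen, hΓ.2 x hx]
  ring

lemma IsLC.koszul (hg : ∀ x u v, g x u v = g x v u) (hΓ : IsLC g Γ s) (hx : x ∈ s)
    (u v z : E) :
    2 * g x (Γ x u v) z = fderiv ℝ (fun y => g y v z) x u + fderiv ℝ (fun y => g y u z) x v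
      - fderiv ℝ (fun y => g y u v) x z := by
  rw [hΓ.2 x hx u v z, hΓ.2 x hx v u z, hΓ.2 x hx z u v, hΓ.1 x hx v u, hΓ.1 x hx z u,
    hΓ.1 x hx z v, hg x (Γ x u z) v]
  ring

lemma IsLC.two_mul_covTen (hg : ∀ x u v, g x u v = g x v u) (hΓ : IsLC g Γ s) (hx : x ∈ s)
    {T : E → E → E → ℝ} {Tend : E → E → E} (hT : ∀ a b, T x a b = g x a (Tend x b))
    (hTsymm : ∀ a b, T x a b = T x b a) (u v w : E) :
    2 * covTen Γ T x u v w = 2 * fderiv ℝ (fun y => T y v w) x u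
      - (fderiv ℝ (fun y => g y v (Tend x w)) x u + fderiv ℝ (fun y => g y u (Tend x w)) x v
          - fderiv ℝ (fun y => g y u v) x (Tend x w))
      - (fderiv ℝ (fun y => g y w (Tend x v)) x u + fderiv ℝ (fun y => g y u (Tend x v)) x w
          - fderiv ℝ (fun y => g y u w) x (Tend x v)) := by
  rw [← hΓ.koszul hg hx u v (Tend x w), ← hΓ.koszul hg hx u w (Tend x v), covTen,
    hT, hTsymm v, hT]
  ring

lemma coneMetric_comm {g : E → E → E → ℝ} (hg : ∀ x u v, g x u v = g x v u)
    (p u v : ℝ × E) : coneMetric g p u v = coneMetric g p v u := by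
  rw [coneMetric, coneMetric, hg, mul_comm u.1]

end LeviCivita

section ConeCoordinates

variable {E : Type*} [NormedAddCommGroup E] [NormedSpace ℝ E]

lemma fderiv_snd_fst_apply (p u : ℝ × (ℝ × E)) :
    fderiv ℝ (fun y : ℝ × (ℝ × E) => y.2.1) p u = u.2.1 := by
  rw [hasFDerivAt_snd.fst.fderiv]
  rfl

lemma fderiv_comp_snd_snd_apply {f : E → ℝ} {p : ℝ × (ℝ × E)}
    (hf : DifferentiableAt ℝ f p.2.2) (u : ℝ × (ℝ × E)) :
    fderiv ℝ (fun y : ℝ × (ℝ × E) => f y.2.2) p u = fderiv ℝ f p.2.2 u.2.2 :=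
  congrArg (· u) (hf.hasFDerivAt.comp p hasFDerivAt_snd.snd).fderiv

/-- If the function were not differentiable at `p`, its derivative would be the junk value `0`;
metric compatibility along `∂_r`, tested on `∂_s`, `Y`, `Z`, `∂_s + Y`, `∂_s + Z`, would then
force `p.1 = 0`, because `y ↦ ĝ_y(∂_s, ·) = y.1 ^ 2 ds` has a nonzero radial derivative. -/
lemma differentiableAt_sq_mul_of_isLC_coneMetric {k : ℝ × E → E → E → ℝ}
    {g : ℝ × E → ℝ × E → ℝ × E → ℝ} (hg : ∀ x u v, g x u v = u.1 * v.1 + k x u.2 v.2)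
    (hk : ∀ x Y, k x 0 Y = 0 ∧ k x Y 0 = 0)
    {Γ : ℝ × (ℝ × E) → ℝ × (ℝ × E) → ℝ × (ℝ × E) → ℝ × (ℝ × E)} {s : Set (ℝ × (ℝ × E))}
    (hΓ : IsLC (coneMetric g) Γ s) {p : ℝ × (ℝ × E)} (hp : p ∈ s) (hr : p.1 ≠ 0) (Y Z : E) :
    DifferentiableAt ℝ (fun y : ℝ × (ℝ × E) => y.1 ^ 2 * k y.2 Y Z) p := by
  by_contra hnd
  set e : ℝ × (ℝ × E) := (1, 0, 0)
  set σ : ℝ × (ℝ × E) := (0, 1, 0)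
  set a : ℝ × (ℝ × E) := (0, 0, Y)
  set b : ℝ × (ℝ × E) := (0, 0, Z)
  have hD0 : fderiv ℝ (fun y : ℝ × (ℝ × E) => y.1 ^ 2 * k y.2 Y Z) p = 0 :=
    fderiv_zero_of_not_differentiableAt hnd
  have hD1 : fderiv ℝ (fun y : ℝ × (ℝ × E) => y.1 ^ 2 * (1 + k y.2 Y Z)) p = 0 := by
    refine fderiv_zero_of_not_differentiableAt fun hd => hnd ?_
    simpa [mul_add, Pi.sub_def, Pi.pow_def] using hd.sub (differentiableAt_fst.pow 2)
  have hσ (c : ℝ × (ℝ × E)) :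
      2 * p.1 * c.2.1 = coneMetric g p (Γ p e σ) c + coneMetric g p σ (Γ p e c) := by
    have hσc : (fun y => coneMetric g y σ c) = fun y : ℝ × (ℝ × E) => c.2.1 * y.1 ^ 2 := by
      funext y
      simp only [coneMetric, zero_mul, hg, one_mul, hk, add_zero, zero_add, σ]
      ring
    rw [← hΓ.2 p hp, hσc]
    simp (disch := fun_prop) only [fderiv_const_mul, fderiv_fun_pow, fderiv_fst, smul_apply,
      ContinuousLinearMap.coe_fst', smul_eq_mul, nsmul_eq_mul, e]
    ring
  have P1 := hΓ.2 p hp e (σ + a) (σ + b)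
  have P2 := hΓ.2 p hp e a b
  have P3 := hΓ.2 p hp e (σ + a) b
  have P4 := hΓ.2 p hp e a (σ + b)
  have Qa := hσ (σ + a)
  have Qb := hσ (σ + b)
  have Q0a := hσ a
  have Q0b := hσ b
  have Qσ := hσ σ
  simp only [coneMetric, hg, hk, hD0, hD1, zero_apply, Prod.mk_add_mk, add_zero, zero_add,
    mul_zero, zero_mul, mul_one, one_mul, σ, a, b, e] at P1 P2 P3 P4 Qa Qb Q0a Q0b Qσ
  exact hr (by linear_combination (Qa + Qb - Qσ - Q0a - Q0b - P1 + P3 + P4 - P2) / 2)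

end ConeCoordinates

section Algebra

variable {F : Type*} {h S : F → F → F → ℝ} {Send : F → F → F}

lemma apply_endo_of_idempotent (hSend : ∀ n u v, S n u v = h n u (Send n v))
    (hS2 : ∀ n u, Send n (Send n u) = Send n u) (n Y Z : F) :
    S n Y (Send n Z) = S n Y Z := by
  rw [hSend, hS2, ← hSend]

def warpedMetric (h S : F → F → F → ℝ) : ℝ × F → ℝ × F → ℝ × F → ℝ :=
  fun x u v => u.1 * v.1 + sin x.1 ^ 2 * (h x.2 u.2 v.2 - S x.2 u.2 v.2)
    + cos x.1 ^ 2 * S x.2 u.2 v.2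

/-- `dρ² + ρ² S` for `ρ = r cos s`, the flat cone metric over the factor of `N` on which `S`
restricts to `h`. -/
def coneTensor (S : F → F → F → ℝ) : ℝ × (ℝ × F) → ℝ × (ℝ × F) → ℝ × (ℝ × F) → ℝ :=
  fun p u v => (u.1 * cos p.2.1 - p.1 * sin p.2.1 * u.2.1)
      * (v.1 * cos p.2.1 - p.1 * sin p.2.1 * v.2.1)
    + (p.1 * cos p.2.1) ^ 2 * S p.2.2 u.2.2 v.2.2

/-- `v ↦ dρ(v) ∇ρ + S̃ v`, with `∇ρ = (cos s, - sin s / r)` the `ĝ`-gradient of `ρ = r cos s`. -/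
def coneEnd (Send : F → F → F) : ℝ × (ℝ × F) → ℝ × (ℝ × F) → ℝ × (ℝ × F) :=
  fun p v => (cos p.2.1 * (v.1 * cos p.2.1 - p.1 * sin p.2.1 * v.2.1),
    -(sin p.2.1 * (v.1 * cos p.2.1 - p.1 * sin p.2.1 * v.2.1)) / p.1, Send p.2.2 v.2.2)

lemma coneTensor_comm (hSsym : ∀ n u v, S n u v = S n v u) (p u v : ℝ × (ℝ × F)) :
    coneTensor S p u v = coneTensor S p v u := by
  simp only [coneTensor, hSsym p.2.2 u.2.2]
  ring

lemma coneEnd_idem (hS2 : ∀ n u, Send n (Send n u) = Send n u) {p : ℝ × (ℝ × F)}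
    (hr : p.1 ≠ 0) (u : ℝ × (ℝ × F)) :
    coneEnd Send p (coneEnd Send p u) = coneEnd Send p u := by
  have hq : (coneEnd Send p u).1 * cos p.2.1 - p.1 * sin p.2.1 * (coneEnd Send p u).2.1
      = u.1 * cos p.2.1 - p.1 * sin p.2.1 * u.2.1 := by
    simp only [coneEnd]
    field_simp
    linear_combination (u.1 * cos p.2.1 - p.1 * sin p.2.1 * u.2.1) * sin_sq_add_cos_sq p.2.1
  simp only [coneEnd] at hq ⊢
  rw [hq, hS2]

end Algebra

section WarpedCone

variable {F : Type*} [NormedAddCommGroup F] [NormedSpace ℝ F] {h S : F → F → F → ℝ}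
  {Send : F → F → F} {ΓN : F → F → F → F}

lemma IsMetric.apply_zero_left (hh : IsMetric h) (n Z : F) : h n 0 Z = 0 :=
  ((hh n).2.1 Z).map_zero

lemma IsMetric.apply_zero_right (hh : IsMetric h) (n Y : F) : h n Y 0 = 0 :=
  ((hh n).1 Y).map_zero

lemma zero_apply_of_eq_apply_endo (hh : IsMetric h)
    (hSend : ∀ n u v, S n u v = h n u (Send n v)) (n Y : F) : S n 0 Y = 0 := by
  rw [hSend, hh.apply_zero_left]

lemma apply_zero_of_eq_apply_endo (hh : IsMetric h) (hSsym : ∀ n u v, S n u v = S n v u)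
    (hSend : ∀ n u v, S n u v = h n u (Send n v)) (n Y : F) : S n Y 0 = 0 := by
  rw [hSsym, zero_apply_of_eq_apply_endo hh hSend]

lemma warpedMetric_comm (hh : IsMetric h) (hSsym : ∀ n u v, S n u v = S n v u)
    (x u v : ℝ × F) : warpedMetric h S x u v = warpedMetric h S x v u := by
  simp only [warpedMetric, (hh x.2).2.2 u.2, hSsym x.2 u.2]
  ring

lemma nondeg_warpedMetric (hh : IsMetric h) (hhnd : Nondeg h univ)
    (hSsym : ∀ n u v, S n u v = S n v u) (hSend : ∀ n u v, S n u v = h n u (Send n v))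
    (hS2 : ∀ n u, Send n (Send n u) = Send n u) :
    Nondeg (warpedMetric h S) {x | sin x.1 ≠ 0 ∧ cos x.1 ≠ 0} := by
  rintro x ⟨hsin, hcos⟩ u hu
  have hu1 : u.1 = 0 := by
    simpa [warpedMetric, hh.apply_zero_right, apply_zero_of_eq_apply_endo hh hSsym hSend]
      using hu (u.1, 0)
  have hSu (V : F) : S x.2 u.2 V = 0 := by
    have := hu (0, Send x.2 V)
    simp only [warpedMetric, hu1, ← hSend, apply_endo_of_idempotent hSend hS2] at this
    simpa [hcos] using this
  have hhu (V : F) : h x.2 u.2 V = 0 := by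
    simpa [warpedMetric, hu1, hSu, hsin] using hu (0, V)
  exact Prod.ext hu1 (hhnd x.2 trivial u.2 hhu)

lemma differentiable_of_isLC_coneMetric_warpedMetric (hh : IsMetric h)
    (hSsym : ∀ n u v, S n u v = S n v u) (hSend : ∀ n u v, S n u v = h n u (Send n v))
    {Γ : ℝ × (ℝ × F) → ℝ × (ℝ × F) → ℝ × (ℝ × F) → ℝ × (ℝ × F)}
    (hΓ : IsLC (coneMetric (warpedMetric h S)) Γ {p | 0 < p.1 ∧ p.2.1 ∈ Ioo 0 (π / 2)}) :
    (∀ Y Z, Differentiable ℝ (fun n => h n Y Z)) ∧ (∀ Y Z, Differentiable ℝ (fun n => S n Y Z)) := by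
  set k : ℝ × F → F → F → ℝ :=
    fun x Y Z => sin x.1 ^ 2 * (h x.2 Y Z - S x.2 Y Z) + cos x.1 ^ 2 * S x.2 Y Z
  have hk : ∀ s₀ ∈ Ioo 0 (π / 2), ∀ Y Z, Differentiable ℝ (fun n => k (s₀, n) Y Z) := by
    intro s₀ hs₀ Y Z n
    have hι : DifferentiableAt ℝ (fun n : F => ((1 : ℝ), s₀, n)) n := by fun_prop
    have := (differentiableAt_sq_mul_of_isLC_coneMetric (k := k)
      (fun x u v => by simp only [warpedMetric, k]; ring)
      (fun x Y => by simp [k, hh.apply_zero_left, hh.apply_zero_right,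
        zero_apply_of_eq_apply_endo hh hSend, apply_zero_of_eq_apply_endo hh hSsym hSend]) hΓ
      (p := (1, s₀, n)) ⟨one_pos, hs₀⟩ one_ne_zero Y Z).comp n hι
    simpa [Function.comp_def] using this
  have hπ : 0 < π := pi_pos
  have hdh (Y Z : F) : Differentiable ℝ (fun n => h n Y Z) := by
    have hk4 : (fun n => h n Y Z) = fun n => 2 * k (π / 4, n) Y Z := funext fun n => by
      simp only [k, cos_sq', sin_pi_div_four, div_pow, sq_sqrt zero_le_two]
      ring
    exact hk4 ▸ (hk (π / 4) ⟨by positivity, by linarith⟩ Y Z).const_mul 2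
  refine ⟨hdh, fun Y Z => ?_⟩
  have hk6 : (fun n => S n Y Z) = fun n => 2 * k (π / 6, n) Y Z - 1 / 2 * h n Y Z :=
    funext fun n => by
      simp only [k, cos_sq', sin_pi_div_six]
      ring
  exact hk6 ▸ ((hk (π / 6) ⟨by positivity, by linarith⟩ Y Z).const_mul 2).sub
    ((hdh Y Z).const_mul (1 / 2))

lemma fderiv_coneMetric_warpedMetric_apply (hdh : ∀ Y Z, Differentiable ℝ (fun n => h n Y Z))
    (hdS : ∀ Y Z, Differentiable ℝ (fun n => S n Y Z))
    (hhpar : ∀ n u v w, covTen ΓN h n u v w = 0) (hSpar : ∀ n u v w, covTen ΓN S n u v w = 0)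
    (p α β γ : ℝ × (ℝ × F)) :
    fderiv ℝ (fun y => coneMetric (warpedMetric h S) y β γ) p α =
      2 * p.1 * α.1 * warpedMetric h S p.2 β.2 γ.2
      + p.1 ^ 2 * (2 * sin p.2.1 * cos p.2.1 * α.2.1
          * (h p.2.2 β.2.2 γ.2.2 - 2 * S p.2.2 β.2.2 γ.2.2)
        + sin p.2.1 ^ 2 * (h p.2.2 (ΓN p.2.2 α.2.2 β.2.2) γ.2.2
            + h p.2.2 β.2.2 (ΓN p.2.2 α.2.2 γ.2.2)
            - S p.2.2 (ΓN p.2.2 α.2.2 β.2.2) γ.2.2 - S p.2.2 β.2.2 (ΓN p.2.2 α.2.2 γ.2.2))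
        + cos p.2.1 ^ 2 * (S p.2.2 (ΓN p.2.2 α.2.2 β.2.2) γ.2.2
            + S p.2.2 β.2.2 (ΓN p.2.2 α.2.2 γ.2.2))) := by
  simp (disch := fun_prop) only [coneMetric, warpedMetric, fderiv_const_add, fderiv_fun_mul,
    fderiv_fun_add, fderiv_fun_sub, fderiv_fun_pow, fderiv_sin, fderiv_cos, fderiv_fst,
    fderiv_snd_fst_apply, add_apply, sub_apply, neg_apply, smul_apply, smul_add, smul_neg,
    neg_smul, smul_eq_mul, nsmul_eq_mul, ContinuousLinearMap.coe_fst']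
  rw [fderiv_comp_snd_snd_apply ((hdh _ _).differentiableAt),
    fderiv_comp_snd_snd_apply ((hdS _ _).differentiableAt),
    fderiv_apply_eq_of_covTen_eq_zero (hhpar ..), fderiv_apply_eq_of_covTen_eq_zero (hSpar ..)]
  ring

lemma fderiv_coneTensor_apply (hdS : ∀ Y Z, Differentiable ℝ (fun n => S n Y Z))
    (hSpar : ∀ n u v w, covTen ΓN S n u v w = 0) (p u v w : ℝ × (ℝ × F)) :
    fderiv ℝ (fun y => coneTensor S y v w) p u =
      (-(v.1 * sin p.2.1 * u.2.1) - (u.1 * sin p.2.1 + p.1 * cos p.2.1 * u.2.1) * v.2.1)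
          * (w.1 * cos p.2.1 - p.1 * sin p.2.1 * w.2.1)
        + (v.1 * cos p.2.1 - p.1 * sin p.2.1 * v.2.1)
          * (-(w.1 * sin p.2.1 * u.2.1) - (u.1 * sin p.2.1 + p.1 * cos p.2.1 * u.2.1) * w.2.1)
        + 2 * (p.1 * cos p.2.1) * (u.1 * cos p.2.1 - p.1 * sin p.2.1 * u.2.1)
          * S p.2.2 v.2.2 w.2.2
        + (p.1 * cos p.2.1) ^ 2
          * (S p.2.2 (ΓN p.2.2 u.2.2 v.2.2) w.2.2 + S p.2.2 v.2.2 (ΓN p.2.2 u.2.2 w.2.2)) := by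
  simp (disch := fun_prop) only [coneTensor, fderiv_fun_add, fderiv_fun_mul, fderiv_fun_sub,
    fderiv_fun_pow, fderiv_fun_const, fderiv_sin, fderiv_cos, fderiv_fst, fderiv_snd_fst_apply,
    Pi.zero_apply, add_apply, sub_apply, neg_apply, smul_apply, smul_add, smul_neg, smul_zero,
    neg_smul, smul_eq_mul, nsmul_eq_mul, ContinuousLinearMap.coe_fst']
  rw [fderiv_comp_snd_snd_apply ((hdS _ _).differentiableAt),
    fderiv_apply_eq_of_covTen_eq_zero (hSpar ..)]
  ring

lemma coneTensor_eq_coneMetric_coneEnd (hSend : ∀ n u v, S n u v = h n u (Send n v))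
    (hS2 : ∀ n u, Send n (Send n u) = Send n u) (p u v : ℝ × (ℝ × F)) :
    coneTensor S p u v = coneMetric (warpedMetric h S) p u (coneEnd Send p v) := by
  simp only [coneTensor, coneEnd, coneMetric, warpedMetric, ← hSend,
    apply_endo_of_idempotent hSend hS2]
  rcases eq_or_ne p.1 0 with hr | hr
  · simp only [hr]
    ring
  · field_simp
    ring

lemma coneTensor_radial (hh : IsMetric h) (hSend : ∀ n u v, S n u v = h n u (Send n v))
    (p : ℝ × (ℝ × F)) : coneTensor S p (1, 0) (1, 0) = cos p.2.1 ^ 2 := by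
  simp only [coneTensor, Prod.fst_zero, Prod.snd_zero, zero_apply_of_eq_apply_endo hh hSend]
  ring

lemma covTen_coneTensor (hh : IsMetric h) (hSsym : ∀ n u v, S n u v = S n v u)
    (hSend : ∀ n u v, S n u v = h n u (Send n v)) (hS2 : ∀ n u, Send n (Send n u) = Send n u)
    (hΓN : IsLC h ΓN univ) (hSpar : ∀ n u v w, covTen ΓN S n u v w = 0)
    (hdh : ∀ Y Z, Differentiable ℝ (fun n => h n Y Z))
    (hdS : ∀ Y Z, Differentiable ℝ (fun n => S n Y Z))
    {Γ : ℝ × (ℝ × F) → ℝ × (ℝ × F) → ℝ × (ℝ × F) → ℝ × (ℝ × F)} {s : Set (ℝ × (ℝ × F))}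
    (hΓ : IsLC (coneMetric (warpedMetric h S)) Γ s) {p : ℝ × (ℝ × F)} (hp : p ∈ s)
    (hr : p.1 ≠ 0) (u v w : ℝ × (ℝ × F)) : covTen Γ (coneTensor S) p u v w = 0 := by
  have key := hΓ.two_mul_covTen (coneMetric_comm (warpedMetric_comm hh hSsym)) hp
    (coneTensor_eq_coneMetric_coneEnd hSend hS2 p) (coneTensor_comm hSsym p) u v w
  simp only [fderiv_coneTensor_apply hdS hSpar, coneEnd, warpedMetric, ← hSend,
    fderiv_coneMetric_warpedMetric_apply hdh hdS (fun _ => hΓN.covTen_eq_zero trivial) hSpar,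
    apply_endo_of_idempotent hSend hS2] at key
  -- Ordered rewriting puts symmetric arguments in a canonical order; then the terms with `ΓN`
  -- cancel and what is left is a multiple of `sin² + cos² - 1`.
  have hΓNc : ∀ a b, ΓN p.2.2 a b = ΓN p.2.2 b a := hΓN.1 _ trivial
  have hhc : ∀ a b, h p.2.2 a b = h p.2.2 b a := (hh p.2.2).2.2
  have hSc : ∀ a b, S p.2.2 a b = S p.2.2 b a := hSsym p.2.2
  simp only [hΓNc, hhc, hSc] at key
  rw [← mul_right_inj' two_ne_zero, key, mul_zero]
  field_simp
  linear_combination 2 * p.1 * cos p.2.1 * ((v.1 * cos p.2.1 - p.1 * sin p.2.1 * v.2.1)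
    * S p.2.2 u.2.2 w.2.2 + (w.1 * cos p.2.1 - p.1 * sin p.2.1 * w.2.1) * S p.2.2 u.2.2 v.2.2)
    * sin_sq_add_cos_sq p.2.1

end WarpedCone

/-- if `(N,h)` carries a parallel symmetric 2-tensor `S` with `S̃² = S̃`,
then `g = ds² + sin²(s)(h - S) + cos²(s)S` on `M = (0, π/2) × N` is nondegenerate, and
the cone over `(M,g)` is decomposable: it admits a parallel symmetric 2-tensor `T`
with `T̃² = T̃` and associated Obata function `α(s,n) = cos²(s)`. -/
theorem decomposable_case_construction
    {F : Type*} [NormedAddCommGroup F] [NormedSpace ℝ F]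
    (h : F → F → F → ℝ) (hh : IsMetric h) (hhnd : Nondeg h Set.univ)
    (ΓN : F → F → F → F) (hΓN : IsLC h ΓN Set.univ)
    (S : F → F → F → ℝ)
    (hSsym : ∀ n u v, S n u v = S n v u)
    (hSpar : ∀ n u v w : F, covTen ΓN S n u v w = 0)
    (Send : F → F → F)
    (hSend : ∀ n u v, S n u v = h n u (Send n v))
    (hS2 : ∀ n u, Send n (Send n u) = Send n u)
    (gM : (ℝ × F) → (ℝ × F) → (ℝ × F) → ℝ)
    (hgM : ∀ (x : ℝ × F) (u v : ℝ × F),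
        gM x u v = u.1 * v.1
          + Real.sin x.1 ^ 2 * (h x.2 u.2 v.2 - S x.2 u.2 v.2)
          + Real.cos x.1 ^ 2 * S x.2 u.2 v.2) :
    Nondeg gM {x : ℝ × F | x.1 ∈ Set.Ioo 0 (Real.pi / 2)} ∧
    (∀ Γc : (ℝ × (ℝ × F)) → (ℝ × (ℝ × F)) → (ℝ × (ℝ × F)) → (ℝ × (ℝ × F)),
      IsLC (coneMetric gM) Γc
          {p : ℝ × (ℝ × F) | 0 < p.1 ∧ p.2.1 ∈ Set.Ioo 0 (Real.pi / 2)} →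
      ∃ (T : (ℝ × (ℝ × F)) → (ℝ × (ℝ × F)) → (ℝ × (ℝ × F)) → ℝ)
        (Tend : (ℝ × (ℝ × F)) → (ℝ × (ℝ × F)) → (ℝ × (ℝ × F))),
        (∀ p u v, T p u v = coneMetric gM p u (Tend p v)) ∧
        (∀ p u v, T p u v = T p v u) ∧
        (∃ p : ℝ × (ℝ × F), (0 < p.1 ∧ p.2.1 ∈ Set.Ioo 0 (Real.pi / 2)) ∧
            ∃ u v, T p u v ≠ 0) ∧
        (∀ p : ℝ × (ℝ × F), 0 < p.1 → p.2.1 ∈ Set.Ioo 0 (Real.pi / 2) →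
            ∀ u v w, covTen Γc T p u v w = 0) ∧
        (∀ p : ℝ × (ℝ × F), 0 < p.1 → p.2.1 ∈ Set.Ioo 0 (Real.pi / 2) →
            ∀ u, Tend p (Tend p u) = Tend p u) ∧
        (∀ p : ℝ × (ℝ × F), 0 < p.1 → p.2.1 ∈ Set.Ioo 0 (Real.pi / 2) →
            T p ((1 : ℝ), (0 : ℝ × F)) ((1 : ℝ), (0 : ℝ × F)) = Real.cos p.2.1 ^ 2)) := by
  obtain rfl : gM = warpedMetric h S := by
    funext x u v
    exact hgM x u v
  have sin_cos_pos {s : ℝ} (hs : s ∈ Ioo 0 (π / 2)) : 0 < sin s ∧ 0 < cos s :=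
    ⟨sin_pos_of_pos_of_lt_pi hs.1 (by linarith [hs.2, pi_pos]),
      cos_pos_of_mem_Ioo ⟨by linarith [hs.1, pi_pos], hs.2⟩⟩
  refine ⟨fun x hx => nondeg_warpedMetric hh hhnd hSsym hSend hS2 x
    ⟨(sin_cos_pos hx).1.ne', (sin_cos_pos hx).2.ne'⟩, fun Γc hΓc => ?_⟩
  obtain ⟨hdh, hdS⟩ := differentiable_of_isLC_coneMetric_warpedMetric hh hSsym hSend hΓc
  have hπ4 : π / 4 ∈ Ioo 0 (π / 2) := ⟨by positivity, by linarith [pi_pos]⟩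
  refine ⟨coneTensor S, coneEnd Send, coneTensor_eq_coneMetric_coneEnd hSend hS2,
    coneTensor_comm hSsym, ⟨(1, π / 4, 0), ⟨one_pos, hπ4⟩, (1, 0), (1, 0), ?_⟩,
    fun p hr hs => covTen_coneTensor hh hSsym hSend hS2 hΓN hSpar hdh hdS hΓc ⟨hr, hs⟩ hr.ne',
    fun p hr _ => coneEnd_idem hS2 hr.ne', fun p _ _ => coneTensor_radial hh hSend p⟩
  rw [coneTensor_radial hh hSend]
  exact pow_ne_zero 2 (sin_cos_pos hπ4).2.ne'
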